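/- arXiv:2003.00455 — 6 statements merged into one kernel-verified Lean document; each statement's English description precedes it below -/
import Mathlib

section
/- If k₁ ≠ k₂ are two distinct real numbers, then O^(k₁)(4,ℝ) ∩ O^(k₂)(4,ℝ) = {±1} × O(3,ℝ), i.e., the set of block matrices diag(ε, B) with ε = ±1 and B ∈ O(3,ℝ). -/
open Matrix

/-- `I^(k) = diag(k,1,1,1)`. -/
def Ik (k : ℝ) : Matrix (Fin 4) (Fin 4) ℝ :=
  Matrix.diagonal (fun i => if i = 0 then k else 1)

/-- `O^(k)(4,ℝ) = { A ∈ GL(4,ℝ) : det(A)² = 1, Aᵀ I^(k) A = I^(k) }`. -/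
def Ok (k : ℝ) : Set (Matrix (Fin 4) (Fin 4) ℝ) :=
  {A | A.det ≠ 0 ∧ A.det ^ 2 = 1 ∧ Aᵀ * Ik k * A = Ik k}

/-- `{±1} × O(3,ℝ)`: block diagonal matrices `diag(ε, B)` with `ε = ±1` and
`B ∈ O(3,ℝ)`. -/
def pmOneTimesO3 : Set (Matrix (Fin 4) (Fin 4) ℝ) :=
  {A | (A 0 0 = 1 ∨ A 0 0 = -1) ∧ (∀ j : Fin 4, j ≠ 0 → A 0 j = 0) ∧
    (∀ i : Fin 4, i ≠ 0 → A i 0 = 0) ∧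
    (A.submatrix Fin.succ Fin.succ)ᵀ * (A.submatrix Fin.succ Fin.succ) = 1}

lemma Ik_entry (k : ℝ) (A : Matrix (Fin 4) (Fin 4) ℝ) (hA : Aᵀ * Ik k * A = Ik k) (i j : Fin 4) :
    k * (A 0 i * A 0 j) + (A 1 i * A 1 j + A 2 i * A 2 j + A 3 i * A 3 j)
      = if i = j then (if i = 0 then k else 1) else 0 := by
  have := congrFun (congrFun hA i) j
  simp [Ik, Matrix.mul_apply, Matrix.diagonal, Fin.sum_univ_four, Matrix.transpose_apply] at this
  ring_nf at this ⊢
  convert this using 2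

lemma Ik_entry_rev (k : ℝ) (A : Matrix (Fin 4) (Fin 4) ℝ)
    (hA : ∀ i j : Fin 4, k * (A 0 i * A 0 j) + (A 1 i * A 1 j + A 2 i * A 2 j + A 3 i * A 3 j)
      = if i = j then (if i = 0 then k else 1) else 0) : Aᵀ * Ik k * A = Ik k := by
  ext i j
  have := hA i j
  simp [Ik, Matrix.mul_apply, Matrix.diagonal, Fin.sum_univ_four, Matrix.transpose_apply]
  ring_nf at this ⊢
  convert this using 2

/-- if `k₁ ≠ k₂` then `O^(k₁)(4,ℝ) ∩ O^(k₂)(4,ℝ) = {±1} × O(3,ℝ)`. -/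
theorem stmt5 (k₁ k₂ : ℝ) (h : k₁ ≠ k₂) : Ok k₁ ∩ Ok k₂ = pmOneTimesO3 := by
  have hc : k₁ - k₂ ≠ 0 := sub_ne_zero.mpr h
  ext A
  constructor
  · rintro ⟨⟨-, -, h1⟩, ⟨-, -, h2⟩⟩
    have e1 := Ik_entry k₁ A h1
    have e2 := Ik_entry k₂ A h2
    have key : ∀ i j : Fin 4, A 0 i * A 0 j = if i = 0 ∧ j = 0 then 1 else 0 := by
      intro i j
      have hr : (if i = j then (if i = 0 then k₁ else 1) else 0)
          - (if i = j then (if i = 0 then k₂ else 1) else 0)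
          = if i = 0 ∧ j = 0 then k₁ - k₂ else 0 := by
        split_ifs with h1' h2' h3' <;> simp_all
      have hm : (k₁ - k₂) * (A 0 i * A 0 j) = (k₁ - k₂) * (if i = 0 ∧ j = 0 then 1 else 0) := by
        rw [mul_ite, mul_one, mul_zero, ← hr]
        linear_combination e1 i j - e2 i j
      exact mul_left_cancel₀ hc hm
    have hx : A 0 0 * A 0 0 = 1 := by simpa using key 0 0
    have pm : A 0 0 = 1 ∨ A 0 0 = -1 := mul_self_eq_one_iff.mp hx
    have h0ne : A 0 0 ≠ 0 := by rcases pm with h' | h' <;> rw [h'] <;> norm_num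
    have row : ∀ j : Fin 4, j ≠ 0 → A 0 j = 0 := by
      intro j hj
      have := key 0 j
      simp [hj] at this
      exact this.resolve_left h0ne
    have hS : A 1 0 * A 1 0 + A 2 0 * A 2 0 + A 3 0 * A 3 0 = 0 := by
      have := e2 0 0
      simp [hx] at this
      linarith
    have c1 : A 1 0 = 0 := by
      rw [← mul_self_eq_zero]
      nlinarith [mul_self_nonneg (A 2 0), mul_self_nonneg (A 3 0)]
    have c2 : A 2 0 = 0 := by
      rw [← mul_self_eq_zero]
      nlinarith [mul_self_nonneg (A 1 0), mul_self_nonneg (A 3 0)]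
    have c3 : A 3 0 = 0 := by
      rw [← mul_self_eq_zero]
      nlinarith [mul_self_nonneg (A 1 0), mul_self_nonneg (A 2 0)]
    have col : ∀ i : Fin 4, i ≠ 0 → A i 0 = 0 := by
      intro i hi
      fin_cases i
      · exact absurd rfl hi
      · exact c1
      · exact c2
      · exact c3
    refine ⟨pm, row, col, ?_⟩
    ext i j
    have := e2 i.succ j.succ
    rw [row i.succ (Fin.succ_ne_zero i), row j.succ (Fin.succ_ne_zero j)] at this
    simp [Matrix.mul_apply, Fin.sum_univ_three, Matrix.one_apply, Fin.succ_ne_zero] at this ⊢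
    exact this
  · rintro ⟨pm, row, col, ortho⟩
    have o : ∀ i j : Fin 4, i ≠ 0 → j ≠ 0 →
        A 1 i * A 1 j + A 2 i * A 2 j + A 3 i * A 3 j = if i = j then 1 else 0 := by
      intro i j hi hj
      obtain ⟨i', rfl⟩ := Fin.eq_succ_of_ne_zero hi
      obtain ⟨j', rfl⟩ := Fin.eq_succ_of_ne_zero hj
      have := congrFun (congrFun ortho i') j'
      simp [Matrix.mul_apply, Fin.sum_univ_three, Matrix.one_apply] at this
      simp only [Fin.succ_inj]
      exact this
    have hk : ∀ k, Aᵀ * Ik k * A = Ik k := by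
      intro k
      apply Ik_entry_rev
      intro i j
      by_cases hi : i = 0 <;> by_cases hj : j = 0
      · subst hi hj
        have h00 : A 0 0 * A 0 0 = 1 := by rcases pm with h' | h' <;> rw [h'] <;> norm_num
        simp [col 1 (by norm_num), col 2 (by decide), col 3 (by decide), h00]
      · subst hi
        simp [row j hj, col 1 (by norm_num), col 2 (by decide), col 3 (by decide),
          Ne.symm hj]
      · subst hj
        simp [row i hi, col 1 (by norm_num), col 2 (by decide), col 3 (by decide), hi]
      · rw [row i hi, o i j hi hj]
        simp [hi]
    have hAA : Aᵀ * A = 1 := by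
      have h1 := hk 1
      have : Ik 1 = 1 := by
        ext i j
        simp [Ik, Matrix.diagonal, Matrix.one_apply]
      rwa [this, mul_one] at h1
    have hdet : A.det ^ 2 = 1 := by
      have := congrArg Matrix.det hAA
      rwa [Matrix.det_mul, Matrix.det_transpose, ← sq, Matrix.det_one] at this
    have hdne : A.det ≠ 0 := by
      intro h0
      rw [h0] at hdet
      norm_num at hdet
    exact ⟨⟨hdne, hdet, hk k₁⟩, ⟨hdne, hdet, hk k₂⟩⟩
end

section
/- The dual Galilean (Carrollian) group, consisting of all block matrices [[ε, aₕ],[0, B]] with ε = ±1, aₕ ∈ ℝ³ (a row vector) and B ∈ O(3,ℝ), equals O^(0)(4,ℝ) = { A ∈ GL(4,ℝ) : det(A)² = 1, Aᵀ I^(0) A = I^(0) }, where I^(0) = diag(0,1,1,1). -/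
open Matrix

/-- The dual Galilean (Carrollian) group: block matrices `[[ε, aₕ],[0, B]]`
with `ε = ±1`, `aₕ ∈ ℝ³` arbitrary, and `B ∈ O(3,ℝ)`. -/
def dualGalilean : Set (Matrix (Fin 4) (Fin 4) ℝ) :=
  {A | (A 0 0 = 1 ∨ A 0 0 = -1) ∧ (∀ i : Fin 4, i ≠ 0 → A i 0 = 0) ∧
    (A.submatrix Fin.succ Fin.succ)ᵀ * (A.submatrix Fin.succ Fin.succ) = 1}

lemma aux_entry (A : Matrix (Fin 4) (Fin 4) ℝ) (i j : Fin 4) :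
    (Aᵀ * Ik 0 * A) i j = A 1 i * A 1 j + A 2 i * A 2 j + A 3 i * A 3 j := by
  simp [Ik, Matrix.mul_apply, Matrix.diagonal, Fin.sum_univ_four]

lemma aux_B (A : Matrix (Fin 4) (Fin 4) ℝ) (i j : Fin 3) :
    ((A.submatrix Fin.succ Fin.succ)ᵀ * (A.submatrix Fin.succ Fin.succ)) i j
      = A 1 i.succ * A 1 j.succ + A 2 i.succ * A 2 j.succ + A 3 i.succ * A 3 j.succ := by
  simp [Matrix.mul_apply, Fin.sum_univ_three]

lemma aux_det (A : Matrix (Fin 4) (Fin 4) ℝ) (h : ∀ i : Fin 4, i ≠ 0 → A i 0 = 0) :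
    A.det = A 0 0 * (A.submatrix Fin.succ Fin.succ).det := by
  rw [Matrix.det_succ_column_zero]
  simp [Fin.sum_univ_four, h 1 (by decide), h 2 (by decide), h 3 (by decide),
    Fin.succAbove_zero]


/-- the dual Galilean (Carrollian) group equals `O^(0)(4,ℝ)`. -/
theorem stmt9 : dualGalilean = Ok 0 := by
  ext A
  constructor
  · rintro ⟨hε, h0, horth⟩
    have hdetB : (A.submatrix Fin.succ Fin.succ).det ^ 2 = 1 := by
      have := congrArg Matrix.det horth
      rw [Matrix.det_mul, Matrix.det_transpose, Matrix.det_one] at this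
      rw [sq]; exact this
    have hdet : A.det = A 0 0 * (A.submatrix Fin.succ Fin.succ).det := aux_det A h0
    have hA00 : A 0 0 ^ 2 = 1 := by rcases hε with h | h <;> rw [h] <;> norm_num
    have hdet2 : A.det ^ 2 = 1 := by rw [hdet, mul_pow, hA00, hdetB]; ring
    refine ⟨fun h => by simp [h] at hdet2, hdet2, ?_⟩
    have hB : ∀ i j : Fin 3,
        A 1 i.succ * A 1 j.succ + A 2 i.succ * A 2 j.succ + A 3 i.succ * A 3 j.succ
          = if i = j then 1 else 0 := by
      intro i j
      rw [← aux_B, horth]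
      simp [Matrix.one_apply]
    ext i j
    rw [aux_entry]
    rcases Fin.eq_zero_or_eq_succ i with rfl | ⟨i', rfl⟩
    · rcases Fin.eq_zero_or_eq_succ j with rfl | ⟨j', rfl⟩
      · simp [Ik, h0 1 (by decide), h0 2 (by decide), h0 3 (by decide)]
      · simp [Ik, h0 1 (by decide), h0 2 (by decide), h0 3 (by decide),
          Matrix.diagonal, (Fin.succ_ne_zero j').symm]
    · rcases Fin.eq_zero_or_eq_succ j with rfl | ⟨j', rfl⟩
      · simp [Ik, h0 1 (by decide), h0 2 (by decide), h0 3 (by decide),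
          Matrix.diagonal, Fin.succ_ne_zero i']
      · rw [hB i' j']
        simp [Ik, Matrix.diagonal, Fin.succ_ne_zero, Fin.succ_inj]
  · rintro ⟨hdne, hdet2, h⟩
    have he : ∀ i j : Fin 4, A 1 i * A 1 j + A 2 i * A 2 j + A 3 i * A 3 j
        = if i = j then (if i = 0 then 0 else 1) else 0 := by
      intro i j
      rw [← aux_entry, h]
      simp [Ik, Matrix.diagonal, Matrix.one_apply]
    have h00 := he 0 0
    simp at h00
    have h0 : ∀ i : Fin 4, i ≠ 0 → A i 0 = 0 := by
      have h1 : A 1 0 = 0 := by nlinarith [sq_nonneg (A 1 0), sq_nonneg (A 2 0), sq_nonneg (A 3 0)]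
      have h2 : A 2 0 = 0 := by nlinarith [sq_nonneg (A 1 0), sq_nonneg (A 2 0), sq_nonneg (A 3 0)]
      have h3 : A 3 0 = 0 := by nlinarith [sq_nonneg (A 1 0), sq_nonneg (A 2 0), sq_nonneg (A 3 0)]
      intro i hi
      fin_cases i <;> simp_all
    have horth : (A.submatrix Fin.succ Fin.succ)ᵀ * (A.submatrix Fin.succ Fin.succ) = 1 := by
      ext i j
      rw [aux_B, he]
      simp [Matrix.one_apply, Fin.succ_ne_zero, Fin.succ_inj]
    refine ⟨?_, h0, horth⟩
    have hdetB : (A.submatrix Fin.succ Fin.succ).det ^ 2 = 1 := by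
      have := congrArg Matrix.det horth
      rw [Matrix.det_mul, Matrix.det_transpose, Matrix.det_one] at this
      rw [sq]; exact this
    have hdet : A.det = A 0 0 * (A.submatrix Fin.succ Fin.succ).det := aux_det A h0
    have hA00 : A 0 0 ^ 2 = 1 := by
      have : A 0 0 ^ 2 * (A.submatrix Fin.succ Fin.succ).det ^ 2 = 1 := by
        rw [← mul_pow, ← hdet, hdet2]
      rw [hdetB, mul_one] at this; exact this
    exact mul_self_eq_one_iff.mp (by nlinarith)
end

section
/- For k = -c² with c > 0, if A ∈ O^(k)(4,ℝ) then its first column (a₀₀, a_v) satisfies |a_v|² = c²(a₀₀² - 1); hence the speed |v| = |a_v|/|a₀₀| satisfies |v|² = c² − c²/a₀₀² < c², and as a₀₀ ranges over all values ≥ 1 attained in the group, the supremum of |v| over O^(k)(4,ℝ) equals c. -/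
open Matrix

/-- A Lorentz boost in the `x` direction with velocity `v`. -/
noncomputable def boost (c v : ℝ) : Matrix (Fin 4) (Fin 4) ℝ :=
  !![1/Real.sqrt (1 - v^2/c^2), v/(c^2*Real.sqrt (1 - v^2/c^2)), 0, 0;
     v/Real.sqrt (1 - v^2/c^2), 1/Real.sqrt (1 - v^2/c^2), 0, 0;
     0,0,1,0; 0,0,0,1]

lemma det_Ik (k : ℝ) : (Ik k).det = k := by
  simp [Ik, Matrix.det_diagonal, Fin.prod_univ_four]

/-- Membership in `O^(k)` follows from the quadratic relation alone (for `k ≠ 0`). -/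
lemma mem_Ok_of_rel {k : ℝ} (hk : k ≠ 0) {A : Matrix (Fin 4) (Fin 4) ℝ}
    (h : Aᵀ * Ik k * A = Ik k) : A ∈ Ok k := by
  have hd : A.det ^ 2 * (Ik k).det = (Ik k).det := by
    have := congrArg Matrix.det h
    simpa [Matrix.det_mul, Matrix.det_transpose, sq, mul_comm, mul_assoc, mul_left_comm]
      using this
  rw [det_Ik] at hd
  have h2 : A.det ^ 2 = 1 := by
    have := mul_right_cancel₀ hk (by linarith [hd] : A.det ^ 2 * k = 1 * k)
    simpa using this
  refine ⟨?_, h2, h⟩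
  intro h0
  rw [h0] at h2; norm_num at h2

set_option maxHeartbeats 1000000 in
lemma boost_rel (c v : ℝ) (hc0 : c ≠ 0) (hg0 : Real.sqrt (1 - v^2/c^2) ≠ 0)
    (hg2 : (Real.sqrt (1 - v^2/c^2))^2 = 1 - v^2/c^2) :
    (boost c v)ᵀ * Ik (-c^2) * boost c v = Ik (-c^2) := by
  set g := Real.sqrt (1 - v^2/c^2) with hgdef
  have hg2' : c^2 * g^2 = c^2 - v^2 := by field_simp at hg2; linarith
  have hb : boost c v = !![1/g, v/(c^2*g), 0, 0; v/g, 1/g, 0, 0; 0,0,1,0; 0,0,0,1] := rfl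
  have ht : (!![1/g, v/(c^2*g), 0, 0; v/g, 1/g, 0, 0; 0,0,1,0; 0,0,0,1])ᵀ
      = !![1/g, v/g, 0, 0; v/(c^2*g), 1/g, 0, 0; 0,0,1,0; 0,0,0,1] := by
    rw [← Matrix.transposeᵣ_eq]; rfl
  rw [hb, ht]
  ext i j
  fin_cases i <;> fin_cases j <;>
    simp [Ik, Matrix.mul_apply, Matrix.diagonal_apply, Fin.sum_univ_four,
      Matrix.vecMul_diagonal, Matrix.vecHead, Matrix.vecTail] <;>
    field_simp <;> nlinarith [hg2', sq_nonneg g, sq_nonneg c, sq_nonneg v, hg2]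

lemma boost_mem (c v : ℝ) (hc : 0 < c) (hv : 0 ≤ v) (hvc : v < c) :
    boost c v ∈ Ok (-c^2) := by
  have hc0 : c ≠ 0 := ne_of_gt hc
  have hnn : 0 ≤ 1 - v^2/c^2 := by
    rw [sub_nonneg, div_le_one (by positivity)]; nlinarith
  have hgpos : 0 < Real.sqrt (1 - v^2/c^2) := Real.sqrt_pos.mpr (by
    rw [sub_pos, div_lt_one (by positivity)]; nlinarith)
  exact mem_Ok_of_rel (by simp [hc0]) (boost_rel c v hc0 (ne_of_gt hgpos) (Real.sq_sqrt hnn))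

/-- for `k = -c²`, `c > 0`, any `A ∈ O^(k)(4,ℝ)` has first column
`(a₀₀, a_v)` with `|a_v|² = c²(a₀₀² − 1)`; hence the speed `|v| = |a_v|/|a₀₀|`
satisfies `|v|² = c² − c²/a₀₀² < c²`, and the supremum of the speeds over the
group equals `c`. -/
theorem stmt11 (c : ℝ) (hc : 0 < c) :
    (∀ A ∈ Ok (-c ^ 2),
      (∑ i : Fin 3, (A i.succ 0) ^ 2) = c ^ 2 * ((A 0 0) ^ 2 - 1) ∧
      (∑ i : Fin 3, (A i.succ 0 / A 0 0) ^ 2) = c ^ 2 - c ^ 2 / (A 0 0) ^ 2 ∧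
      Real.sqrt (∑ i : Fin 3, (A i.succ 0 / A 0 0) ^ 2) < c) ∧
    sSup {s : ℝ | ∃ A ∈ Ok (-c ^ 2),
      s = Real.sqrt (∑ i : Fin 3, (A i.succ 0 / A 0 0) ^ 2)} = c := by
  have key : ∀ A ∈ Ok (-c ^ 2),
      (∑ i : Fin 3, (A i.succ 0) ^ 2) = c ^ 2 * ((A 0 0) ^ 2 - 1) ∧
      (∑ i : Fin 3, (A i.succ 0 / A 0 0) ^ 2) = c ^ 2 - c ^ 2 / (A 0 0) ^ 2 ∧
      Real.sqrt (∑ i : Fin 3, (A i.succ 0 / A 0 0) ^ 2) < c := by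
    intro A hA
    obtain ⟨hdet, hdet2, hrel⟩ := hA
    have h00 : (Aᵀ * Ik (-c^2) * A) 0 0 = Ik (-c^2) 0 0 := by rw [hrel]
    simp [Ik, Matrix.mul_apply, Matrix.diagonal_apply, Fin.sum_univ_four,
      Matrix.vecMul_diagonal, Matrix.transpose_apply] at h00
    have h1 : (∑ i : Fin 3, (A i.succ 0) ^ 2) = c ^ 2 * ((A 0 0) ^ 2 - 1) := by
      rw [Fin.sum_univ_three]
      show A 1 0 ^ 2 + A 2 0 ^ 2 + A 3 0 ^ 2 = _
      nlinarith [h00]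
    have hsum_nn : 0 ≤ ∑ i : Fin 3, (A i.succ 0) ^ 2 :=
      Finset.sum_nonneg fun i _ => sq_nonneg _
    have hc2 : (0:ℝ) < c ^ 2 := by positivity
    have ha2 : 1 ≤ (A 0 0)^2 := by nlinarith [h1, hsum_nn, hc2]
    have ha0 : A 0 0 ≠ 0 := by intro h; rw [h] at ha2; norm_num at ha2
    have h2 : (∑ i : Fin 3, (A i.succ 0 / A 0 0) ^ 2) = c ^ 2 - c ^ 2 / (A 0 0) ^ 2 := by
      have e : (∑ i : Fin 3, (A i.succ 0 / A 0 0) ^ 2)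
          = (∑ i : Fin 3, (A i.succ 0) ^ 2) / (A 0 0)^2 := by
        rw [Finset.sum_div]
        refine Finset.sum_congr rfl fun i _ => ?_
        rw [div_pow]
      rw [e, h1]
      field_simp
    refine ⟨h1, h2, ?_⟩
    rw [h2, Real.sqrt_lt' hc]
    have : 0 < c^2 / (A 0 0)^2 := by positivity
    linarith
  refine ⟨key, ?_⟩
  have hset : {s : ℝ | ∃ A ∈ Ok (-c ^ 2),
      s = Real.sqrt (∑ i : Fin 3, (A i.succ 0 / A 0 0) ^ 2)} = Set.Ico 0 c := by
    ext s
    constructor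
    · rintro ⟨A, hA, rfl⟩
      exact ⟨Real.sqrt_nonneg _, (key A hA).2.2⟩
    · rintro ⟨hs0, hsc⟩
      refine ⟨boost c s, boost_mem c s hc hs0 hsc, ?_⟩
      have hc0 : c ≠ 0 := ne_of_gt hc
      have hgpos : 0 < Real.sqrt (1 - s^2/c^2) := Real.sqrt_pos.mpr (by
        rw [sub_pos, div_lt_one (by positivity)]; nlinarith)
      have hg0 : Real.sqrt (1 - s^2/c^2) ≠ 0 := ne_of_gt hgpos
      have e0 : boost c s (0:Fin 3).succ 0 / boost c s 0 0 = s := by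
        show (s/Real.sqrt (1 - s^2/c^2)) / (1/Real.sqrt (1 - s^2/c^2)) = s
        have hq : Real.sqrt (c^2 - s^2) ≠ 0 :=
          ne_of_gt (Real.sqrt_pos.mpr (by nlinarith))
        field_simp
        exact mul_div_cancel_right₀ s (Real.sqrt_ne_zero'.mpr (div_pos (by nlinarith) (by positivity)))
      have e1 : boost c s (1:Fin 3).succ 0 / boost c s 0 0 = 0 := by
        show (0:ℝ) / (1/Real.sqrt (1 - s^2/c^2)) = 0
        simp
      have e2 : boost c s (2:Fin 3).succ 0 / boost c s 0 0 = 0 := by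
        show (0:ℝ) / (1/Real.sqrt (1 - s^2/c^2)) = 0
        simp
      rw [Fin.sum_univ_three, e0, e1, e2]
      norm_num [Real.sqrt_sq hs0]
  rw [hset]
  exact csSup_Ico hc
end

section
/- Let F₀ : ℝⁿ → ℝ be a norm such that F₀² is twice continuously differentiable at 0. Then F₀ comes from an inner product, i.e., there is a positive definite symmetric bilinear form g with F₀(v)² = g(v,v) for all v. -/
open Topology Filter

/-- Warner: a norm `F₀` on `ℝⁿ` whose square is `C²` at `0` comes
from an inner product, i.e. there is a positive definite symmetric bilinear form
`g` with `F₀(v)² = g(v,v)`. -/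
theorem stmt13 (n : ℕ) (F₀ : (Fin n → ℝ) → ℝ)
    (hnn : ∀ v, 0 ≤ F₀ v)
    (hzero : ∀ v, F₀ v = 0 ↔ v = 0)
    (hhom : ∀ (a : ℝ) (v : Fin n → ℝ), F₀ (a • v) = |a| * F₀ v)
    (htri : ∀ u v, F₀ (u + v) ≤ F₀ u + F₀ v)
    (hC2 : ContDiffAt ℝ 2 (fun v => F₀ v ^ 2) 0) :
    ∃ g : (Fin n → ℝ) →ₗ[ℝ] (Fin n → ℝ) →ₗ[ℝ] ℝ,
      (∀ u v, g u v = g v u) ∧ (∀ v, v ≠ 0 → 0 < g v v) ∧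
      ∀ v, F₀ v ^ 2 = g v v := by
  set f : (Fin n → ℝ) → ℝ := fun v => F₀ v ^ 2 with hf
  -- f is 2-homogeneous
  have hfhom : ∀ (t : ℝ) v, f (t • v) = t ^ 2 * f v := by
    intro t v
    simp only [hf, hhom t v, mul_pow, sq_abs]
  -- f is differentiable on an open neighborhood of 0
  obtain ⟨u, hu, hcd⟩ : ∃ u ∈ 𝓝 (0 : Fin n → ℝ), ContDiffOn ℝ 2 f u :=
    hC2.contDiffOn le_rfl (by simp)
  obtain ⟨s, hsu, hs_open, hs0⟩ := mem_nhds_iff.1 hu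
  have hdiff : ∀ x ∈ s, DifferentiableAt ℝ f x := fun x hx =>
    ((hcd.mono hsu).differentiableOn (by norm_num)).differentiableAt
      (hs_open.mem_nhds hx)
  -- second derivative
  have h1 : ContDiffAt ℝ 1 (fderiv ℝ f) 0 := hC2.fderiv_right le_rfl
  set B := fderiv ℝ (fderiv ℝ f) 0 with hB
  have hBd : HasFDerivAt (fderiv ℝ f) B 0 :=
    (h1.differentiableAt one_ne_zero).hasFDerivAt
  -- key identity : B v v = 2 * f v
  have key : ∀ v, B v v = 2 * f v := by
    intro v
    -- derivative of t ↦ fderiv f (t • v) at 0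
    have hline : HasDerivAt (fun t : ℝ => t • v) v 0 := by
      simpa using (hasDerivAt_id (0:ℝ)).smul_const v
    have hcomp : HasDerivAt (fun t : ℝ => fderiv ℝ f (t • v)) (B v) 0 := by
      have hBd' : HasFDerivAt (fderiv ℝ f) B ((0:ℝ) • v) := by
        simpa using hBd
      simpa [Function.comp_def] using hBd'.comp_hasDerivAt (x := (0:ℝ)) hline
    have heval : HasDerivAt (fun t : ℝ => fderiv ℝ f (t • v) v) (B v v) 0 := by
      have := (ContinuousLinearMap.apply ℝ ℝ v).hasFDerivAt.comp_hasDerivAt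
        (x := (0:ℝ)) hcomp
      simpa [Function.comp_def] using this
    -- eventually, fderiv f (t • v) v = 2 * t * f v
    have hev : ∀ᶠ t in 𝓝 (0:ℝ), fderiv ℝ f (t • v) v = 2 * t * f v := by
      have hcont : Filter.Tendsto (fun t : ℝ => t • v) (𝓝 0) (𝓝 0) := by
        have : Continuous fun t : ℝ => t • v := (continuous_id).smul continuous_const
        simpa using this.tendsto 0
      filter_upwards [hcont.eventually_mem (hs_open.mem_nhds hs0)] with t ht
      -- ψ t = f (t • v) = t^2 * f v
      have hψ1 : HasDerivAt (fun t : ℝ => f (t • v)) (fderiv ℝ f (t • v) v) t := by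
        have hl : HasDerivAt (fun s : ℝ => s • v) v t := by
          simpa using (hasDerivAt_id t).smul_const v
        simpa [Function.comp_def] using ((hdiff _ ht).hasFDerivAt.comp_hasDerivAt t hl)
      have hψ2 : HasDerivAt (fun t : ℝ => f (t • v)) (2 * t * f v) t := by
        have : HasDerivAt (fun t : ℝ => t ^ 2 * f v) (2 * t * f v) t := by
          simpa [mul_comm, mul_assoc] using
            ((hasDerivAt_pow 2 t).mul_const (f v))
        exact this.congr_of_eventuallyEq
          (Filter.Eventually.of_forall fun s =>
            show f (s • v) = s ^ 2 * f v from hfhom s v)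
      exact hψ1.unique hψ2
    have heval' : HasDerivAt (fun t : ℝ => 2 * t * f v) (B v v) 0 :=
      heval.congr_of_eventuallyEq (hev.mono fun t ht => ht.symm)
    have h2 : HasDerivAt (fun t : ℝ => 2 * t * f v) (2 * f v) 0 := by
      simpa [mul_comm, mul_assoc] using
        ((hasDerivAt_id (0:ℝ)).const_mul 2).mul_const (f v)
    exact heval'.unique h2
  -- symmetry of B
  have hsymm : ∀ u v, B u v = B v u := fun u v =>
    hC2.isSymmSndFDerivAt (by simp) u v
  -- build the bilinear form
  refine ⟨LinearMap.mk₂ ℝ (fun u v => B u v / 2)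
    (fun u u' v => by simp [add_div])
    (fun a u v => by simp [mul_div_assoc])
    (fun u v v' => by simp [add_div])
    (fun a u v => by simp [mul_div_assoc]), ?_, ?_, ?_⟩
  · intro u v; simp [hsymm u v]
  · intro v hv
    have : F₀ v ≠ 0 := fun h => hv ((hzero v).1 h)
    have hfv : 0 < f v := by positivity
    simp only [LinearMap.mk₂_apply, key v]
    linarith
  · intro v
    simp only [LinearMap.mk₂_apply, key v]
    ring
end

section
/- Let (V, g₁) and (W, g₂) be finite-dimensional Lorentzian vector spaces of the same dimension n ≥ 3, and let f : V → W be a linear isomorphism mapping the light cone of g₁ onto the light cone of g₂ (i.e., g₁(v,v) = 0 ⟺ g₂(f(v), f(v)) = 0). Then f is a homothety: there is a constant λ > 0 such that g₂(f(u), f(v)) = λ g₁(u,v) for all u, v ∈ V. -/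
/-- a linear isomorphism between Lorentzian vector spaces of the same
dimension `n ≥ 3` which maps the light cone onto the light cone is a homothety:
`B₂(f u, f v) = λ B₁(u,v)` for some constant `λ > 0`. Lorentzian signature
`(1, n−1)` is encoded by the existence of a basis in which the bilinear form is
`diag(1,−1,…,−1)`. -/
theorem stmt14 (n : ℕ) (hn : 3 ≤ n)
    (V W : Type*) [AddCommGroup V] [Module ℝ V] [AddCommGroup W] [Module ℝ W]
    (B₁ : V →ₗ[ℝ] V →ₗ[ℝ] ℝ) (B₂ : W →ₗ[ℝ] W →ₗ[ℝ] ℝ)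
    (b₁ : Module.Basis (Fin n) ℝ V) (b₂ : Module.Basis (Fin n) ℝ W)
    (hB₁ : ∀ i j, B₁ (b₁ i) (b₁ j) = if i = j then (if (i : ℕ) = 0 then 1 else -1) else 0)
    (hB₂ : ∀ i j, B₂ (b₂ i) (b₂ j) = if i = j then (if (i : ℕ) = 0 then 1 else -1) else 0)
    (f : V ≃ₗ[ℝ] W)
    (hcone : ∀ v : V, B₁ v v = 0 ↔ B₂ (f v) (f v) = 0) :
    ∃ lam : ℝ, 0 < lam ∧ ∀ u v : V, B₂ (f u) (f v) = lam * B₁ u v := by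
  have h0n : 0 < n := by omega
  set i0 : Fin n := ⟨0, by omega⟩ with hi0
  set i1 : Fin n := ⟨1, by omega⟩ with hi1
  set i2 : Fin n := ⟨2, by omega⟩ with hi2
  have hval : ∀ i : Fin n, i ≠ i0 → (i : ℕ) ≠ 0 := by
    intro i h hv; exact h (Fin.ext hv)
  -- symmetry of B₂
  have hsym : ∀ x y : W, B₂ x y = B₂ y x := by
    have h : B₂ = B₂.flip := by
      apply b₂.ext; intro i; apply b₂.ext; intro j
      simp only [LinearMap.flip_apply, hB₂]
      rcases eq_or_ne i j with h | h
      · subst h; rfl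
      · simp [h, h.symm]
    intro x y
    conv_lhs => rw [h]
    rw [LinearMap.flip_apply]
  have hQ : ∀ v : V, B₁ v v = 0 → B₂ (f v) (f v) = 0 := fun v h => (hcone v).mp h
  set lam : ℝ := B₂ (f (b₁ i0)) (f (b₁ i0)) with hlam
  -- cross terms with e₀ and diagonal terms
  have haux : ∀ i : Fin n, i ≠ i0 →
      B₂ (f (b₁ i0)) (f (b₁ i)) = 0 ∧ B₂ (f (b₁ i)) (f (b₁ i)) = -lam := by
    intro i hi
    have hv := hval i hi
    have hp : B₂ (f (b₁ i0 + b₁ i)) (f (b₁ i0 + b₁ i)) = 0 := by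
      apply hQ
      simp [map_add, hB₁, hi, hi.symm, hv, i0]
    have hm : B₂ (f (b₁ i0 - b₁ i)) (f (b₁ i0 - b₁ i)) = 0 := by
      apply hQ
      simp [map_sub, hB₁, hi, hi.symm, hv, i0]
    simp only [map_add, map_sub, LinearMap.add_apply, LinearMap.sub_apply] at hp hm
    have hs := hsym (f (b₁ i0)) (f (b₁ i))
    constructor <;> linarith
  -- off-diagonal spatial terms
  have hoff : ∀ i j : Fin n, i ≠ i0 → j ≠ i0 → i ≠ j →
      B₂ (f (b₁ i)) (f (b₁ j)) = 0 := by
    intro i j hi hj hij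
    have hp : B₂ (f ((5:ℝ) • b₁ i0 + (3:ℝ) • b₁ i + (4:ℝ) • b₁ j))
        (f ((5:ℝ) • b₁ i0 + (3:ℝ) • b₁ i + (4:ℝ) • b₁ j)) = 0 := by
      apply hQ
      simp only [map_add, map_smul, LinearMap.add_apply, LinearMap.smul_apply,
        smul_eq_mul, hB₁]
      simp [hi, hj, hij, hi.symm, hj.symm, hij.symm, hval i hi, hval j hj, i0]
      norm_num
    simp only [map_add, map_smul, LinearMap.add_apply, LinearMap.smul_apply,
      smul_eq_mul] at hp
    have h1 := (haux i hi).1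
    have h2' := (haux j hj).1
    have h3 := (haux i hi).2
    have h4 := (haux j hj).2
    have hs1 := hsym (f (b₁ i0)) (f (b₁ i))
    have hs2 := hsym (f (b₁ i0)) (f (b₁ j))
    have hs3 := hsym (f (b₁ i)) (f (b₁ j))
    rw [← hs1, ← hs2, ← hs3] at hp
    rw [h1, h2', h3, h4] at hp
    linarith
  -- matrix identity
  have hmat : ∀ i j : Fin n, B₂ (f (b₁ i)) (f (b₁ j)) =
      lam * (if i = j then (if (i : ℕ) = 0 then 1 else -1) else 0) := by
    intro i j
    rcases eq_or_ne i i0 with hi | hi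
    · rcases eq_or_ne j i0 with hj | hj
      · subst hi; subst hj; simp [i0]; rfl
      · subst hi
        have := (haux j hj).1
        simp [Ne.symm hj, this, show i0 ≠ j from Ne.symm hj]
    · rcases eq_or_ne j i0 with hj | hj
      · subst hj
        have := (haux i hi).1
        rw [hsym]
        simp [hi, this]
      · rcases eq_or_ne i j with hij | hij
        · subst hij
          have hd := (haux i hi).2
          rw [hd, if_pos rfl, if_neg (hval i hi)]; ring
        · have := hoff i j hi hj hij
          simp [hij, this]
  -- global identity
  have key : ∀ u v : V, B₂ (f u) (f v) = lam * B₁ u v := by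
    have hLL : B₂.compl₁₂ (f : V →ₗ[ℝ] W) (f : V →ₗ[ℝ] W) = lam • B₁ := by
      apply b₁.ext; intro i; apply b₁.ext; intro j
      simp [LinearMap.compl₁₂_apply, hmat, hB₁]
    intro u v
    have := LinearMap.congr_fun (LinearMap.congr_fun hLL u) v
    simpa [LinearMap.compl₁₂_apply] using this
  -- lam ≠ 0
  have hne : lam ≠ 0 := by
    intro h
    have h1 : B₂ (b₂ i0) (b₂ i0) = 1 := by simp [hB₂, i0]
    have h2 := key (f.symm (b₂ i0)) (f.symm (b₂ i0))
    rw [f.apply_symm_apply, h, zero_mul] at h2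
    rw [h2] at h1; norm_num at h1
  -- negativity of B₂ on the hyperplane x₀ = 0
  have hsum : ∀ w : W, b₂.repr w i0 = 0 → B₂ w w ≤ 0 := by
    intro w hw
    have hrepr : (Finset.univ.sum fun i => b₂.repr w i • b₂ i) = w := b₂.sum_repr w
    have e1 : B₂ w w = ∑ i, ∑ j, b₂.repr w i * (b₂.repr w j * B₂ (b₂ j) (b₂ i)) := by
      conv_lhs => rw [← hrepr]
      simp [-Module.Basis.sum_repr, map_sum, LinearMap.sum_apply, map_smul, LinearMap.smul_apply, smul_eq_mul, Finset.mul_sum]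
    have e2 : ∀ i : Fin n, ∑ j, b₂.repr w i * (b₂.repr w j * B₂ (b₂ j) (b₂ i)) =
        b₂.repr w i * (b₂.repr w i * (if (i : ℕ) = 0 then 1 else -1)) := by
      intro i
      rw [Finset.sum_eq_single i]
      · rw [hB₂]; simp
      · intro j _ hji
        rw [hB₂]; simp [hji]
      · intro h; exact absurd (Finset.mem_univ i) h
    rw [e1, Finset.sum_congr rfl fun i _ => e2 i]
    apply Finset.sum_nonpos
    intro i _
    by_cases h : (i : ℕ) = 0
    · have : i = i0 := Fin.ext h
      rw [this, hw]; simp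
    · simp only [h, if_false]
      nlinarith [sq_nonneg (b₂.repr w i : ℝ)]
  have hpos : 0 < lam := by
    rcases lt_trichotomy lam 0 with hl | hl | hl
    · exfalso
      set c1 : ℝ := b₂.repr (f (b₁ i1)) i0 with hc1
      set c2 : ℝ := b₂.repr (f (b₁ i2)) i0 with hc2
      have hi1ne : i1 ≠ i0 := by simp [i1, i0, Fin.ext_iff]
      have hi2ne : i2 ≠ i0 := by simp [i2, i0, Fin.ext_iff]
      have hi12 : i1 ≠ i2 := by simp [i1, i2, Fin.ext_iff]
      by_cases hc : c1 = 0
      · have h1 : B₁ (b₁ i1) (b₁ i1) = -1 := by simp [hB₁, hval i1 hi1ne]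
        have h2 := key (b₁ i1) (b₁ i1)
        rw [h1] at h2
        have h3 := hsum (f (b₁ i1)) hc
        nlinarith
      · set u : V := c2 • b₁ i1 - c1 • b₁ i2 with hu
        have hrep : b₂.repr (f u) i0 = 0 := by
          simp only [hu, map_sub, map_smul, Finsupp.sub_apply, Finsupp.smul_apply,
            smul_eq_mul]
          rw [← hc1, ← hc2]; ring
        have hB1u : B₁ u u = -(c2^2 + c1^2) := by
          simp only [hu, map_sub, map_smul, LinearMap.sub_apply, LinearMap.smul_apply,
            smul_eq_mul, hB₁]
          simp [hi12, hi12.symm, hval i1 hi1ne, hval i2 hi2ne]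
          ring
        have h2 := key u u
        rw [hB1u] at h2
        have h3 := hsum (f u) hrep
        have h5 : 0 < c1 ^ 2 := by positivity
        nlinarith [sq_nonneg c2]
    · exact absurd hl hne
    · exact hl
  exact ⟨lam, hpos, key⟩
end

section
/- Consider on ℝ × ℝ³ the function G(t, w) = t² − F₀(w)², where F₀ is a Minkowski norm on ℝ³. Then the function g(p) = −t(p)² + F₀(x(p))² (the EPS radar product for the t-axis particle with cone t = F₀(x)) is C² at the origin of ℝ⁴ if and only if F₀ comes from a Euclidean inner product. -/
open Set Filter Topology

/-- for a Minkowski norm `F₀` on `ℝ³`, the EPS radar function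
`g(t,x) = −t² + F₀(x)²` (for the `t`-axis particle with cone `t = F₀(x)`) is `C²`
at the origin of `ℝ⁴` if and only if `F₀` comes from a Euclidean inner product. -/
theorem stmt19 (F₀ : (Fin 3 → ℝ) → ℝ)
    (hzero : F₀ 0 = 0)
    (hpos : ∀ v : Fin 3 → ℝ, v ≠ 0 → 0 < F₀ v)
    (hhom : ∀ l : ℝ, 0 < l → ∀ v, F₀ (l • v) = l * F₀ v)
    (htri : ∀ u v, F₀ (u + v) ≤ F₀ u + F₀ v)
    (hsmooth : ContDiffOn ℝ (⊤ : ℕ∞) F₀ {v | v ≠ 0}) :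
    ContDiffAt ℝ 2 (fun p : ℝ × (Fin 3 → ℝ) => -p.1 ^ 2 + F₀ p.2 ^ 2) 0 ↔
    ∃ g : (Fin 3 → ℝ) →ₗ[ℝ] (Fin 3 → ℝ) →ₗ[ℝ] ℝ,
      (∀ u v, g u v = g v u) ∧ (∀ v, v ≠ 0 → 0 < g v v) ∧
      ∀ v, F₀ v ^ 2 = g v v := by
  constructor
  · intro hC
    set f : (Fin 3 → ℝ) → ℝ := fun v => F₀ v ^ 2 with hf_def
    -- f is C² at 0
    have hfC : ContDiffAt ℝ 2 f 0 := by
      have hι : ContDiffAt ℝ 2 (fun x : Fin 3 → ℝ => ((0 : ℝ), x)) 0 :=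
        (contDiff_const.prodMk contDiff_id).contDiffAt
      have h := hC.comp 0 hι
      have : (fun p : ℝ × (Fin 3 → ℝ) => -p.1 ^ 2 + F₀ p.2 ^ 2) ∘
          (fun x : Fin 3 → ℝ => ((0 : ℝ), x)) = f := by
        funext x; simp [hf_def]
      rwa [this] at h
    have hF1 : ∀ᶠ y in 𝓝 (0 : Fin 3 → ℝ), DifferentiableAt ℝ f y := by
      filter_upwards [hfC.eventually (by simp)] with y hy
      exact hy.differentiableAt two_ne_zero
    have hF2 : DifferentiableAt ℝ (fderiv ℝ f) 0 := by
      apply ContDiffAt.differentiableAt _ one_ne_zero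
      exact hfC.fderiv_right (by norm_num)
    set Q : (Fin 3 → ℝ) →L[ℝ] (Fin 3 → ℝ) →L[ℝ] ℝ := fderiv ℝ (fderiv ℝ f) 0 with hQ_def
    have hsymm : ∀ u w, Q u w = Q w u := hfC.isSymmSndFDerivAt (by simp [minSmoothness_of_isRCLikeNormedField])
    -- the key identity: Q v v = 2 * f v
    have key : ∀ v, Q v v = 2 * f v := by
      intro v
      set φ : ℝ → ℝ := fun t => f (t • v) with hφ_def
      set D : ℝ → ℝ := fun t => fderiv ℝ f (t • v) v with hD_def
      have hline : ∀ t : ℝ, HasDerivAt (fun s : ℝ => s • v) v t := by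
        intro t
        simpa using (hasDerivAt_id t).smul_const v
      -- D has derivative Q v v at 0
      have hD : HasDerivAt D (Q v v) 0 := by
        have h1 : HasDerivAt (fun t : ℝ => fderiv ℝ f (t • v)) (Q v) 0 := by
          have h0 : HasFDerivAt (fderiv ℝ f) Q ((0:ℝ) • v) := by simpa using hF2.hasFDerivAt
          have := h0.comp_hasDerivAt 0 (hline 0)
          simpa [Function.comp_def] using this
        have := (ContinuousLinearMap.apply ℝ ℝ v).hasFDerivAt.comp_hasDerivAt 0 h1
        simpa [Function.comp_def] using this
      -- φ equals t^2 * f v on Ici 0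
      have hφψ : ∀ t ∈ Ici (0 : ℝ), φ t = t ^ 2 * f v := by
        intro t ht
        rcases eq_or_lt_of_le (mem_Ici.mp ht) with h | h
        · simp [hφ_def, hf_def, ← h, hzero]
        · simp [hφ_def, hf_def, hhom t h v]; ring
      -- differentiability of f at t • v for t near 0
      have hev : ∀ᶠ t in 𝓝 (0 : ℝ), DifferentiableAt ℝ f (t • v) := by
        have hcont : Continuous (fun t : ℝ => t • v) := by fun_prop
        have : Tendsto (fun t : ℝ => t • v) (𝓝 0) (𝓝 0) := by
          simpa using hcont.tendsto 0
        exact this.eventually hF1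
      have hφt : ∀ t : ℝ, DifferentiableAt ℝ f (t • v) → HasDerivAt φ (D t) t := by
        intro t hdt
        have := hdt.hasFDerivAt.comp_hasDerivAt t (hline t)
        simpa [hφ_def, hD_def, Function.comp_def] using this
      -- value of D at 0
      have hD0 : D 0 = 0 := by
        have hd0 : DifferentiableAt ℝ f ((0 : ℝ) • v) := hev.self_of_nhds
        have h1 : HasDerivWithinAt φ (D 0) (Ici 0) 0 := (hφt 0 hd0).hasDerivWithinAt
        have h2 : HasDerivWithinAt (fun t : ℝ => t ^ 2 * f v) (D 0) (Ici 0) 0 :=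
          h1.congr (fun t ht => (hφψ t ht).symm) (by simpa using (hφψ 0 self_mem_Ici).symm)
        have h3 : HasDerivWithinAt (fun t : ℝ => t ^ 2 * f v) 0 (Ici 0) 0 := by
          simpa using ((hasDerivAt_pow 2 (0 : ℝ)).mul_const (f v)).hasDerivWithinAt
            (s := Ici (0 : ℝ))
        exact (uniqueDiffOn_Ici (0 : ℝ) 0 self_mem_Ici).eq_deriv _ h2 h3
      -- D equals 2 * t * f v on Ici 0 near 0
      have hDev : ∀ᶠ t in 𝓝[Ici (0 : ℝ)] 0, D t = 2 * t * f v := by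
        filter_upwards [nhdsWithin_le_nhds hev, self_mem_nhdsWithin] with t hdt ht
        rcases eq_or_lt_of_le (mem_Ici.mp ht : (0 : ℝ) ≤ t) with h | h
        · simp [← h, hD0]
        · have h1 : HasDerivAt φ (D t) t := hφt t hdt
          have h2 : HasDerivAt φ (2 * t * f v) t := by
            have h3 : HasDerivAt (fun s : ℝ => s ^ 2 * f v) (2 * t * f v) t := by
              simpa [mul_comm] using (hasDerivAt_pow 2 t).mul_const (f v)
            apply h3.congr_of_eventuallyEq
            filter_upwards [Ioi_mem_nhds h] with s hs
            exact hφψ s (mem_Ici.mpr (le_of_lt hs))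
          exact h1.unique h2
      have hE1 : HasDerivWithinAt (fun t : ℝ => 2 * t * f v) (Q v v) (Ici 0) 0 := by
        refine (hD.hasDerivWithinAt).congr_of_eventuallyEq ?_ (by simp [hD0])
        filter_upwards [hDev] with t ht using ht.symm
      have hE2 : HasDerivWithinAt (fun t : ℝ => 2 * t * f v) (2 * f v) (Ici 0) 0 := by
        have : HasDerivAt (fun t : ℝ => 2 * t * f v) (2 * f v) 0 := by
          simpa using ((hasDerivAt_id (0 : ℝ)).const_mul 2).mul_const (f v)
        exact this.hasDerivWithinAt
      exact (uniqueDiffOn_Ici (0 : ℝ) 0 self_mem_Ici).eq_deriv _ hE1 hE2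
    -- build the bilinear form
    refine ⟨LinearMap.mk₂ ℝ (fun u w => Q u w / 2)
      (fun u u' w => by simp [add_div])
      (fun c u w => by simp [mul_div_assoc])
      (fun u w w' => by simp [add_div])
      (fun c u w => by simp [mul_div_assoc]), ?_, ?_, ?_⟩
    · intro u w; simp [hsymm u w]
    · intro v hv
      have : Q v v / 2 = f v := by rw [key v]; ring
      simpa [this, hf_def] using pow_pos (hpos v hv) 2
    · intro v
      have : Q v v / 2 = f v := by rw [key v]; ring
      simp [this, hf_def]
  · rintro ⟨g, hgsymm, hgpos, hg⟩
    have hGc : ∃ Gc : (Fin 3 → ℝ) →L[ℝ] (Fin 3 → ℝ) →L[ℝ] ℝ,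
        ∀ u w, Gc u w = g u w := by
      refine ⟨LinearMap.toContinuousLinearMap
        { toFun := fun u => LinearMap.toContinuousLinearMap (g u)
          map_add' := fun u u' => by ext w; simp
          map_smul' := fun c u => by ext w; simp }, fun u w => by simp⟩
    obtain ⟨Gc, hGc⟩ := hGc
    have hsm : ContDiff ℝ 2 (fun p : ℝ × (Fin 3 → ℝ) => -p.1 ^ 2 + Gc p.2 p.2) := by
      have h1 : ContDiff ℝ 2 (fun p : ℝ × (Fin 3 → ℝ) => Gc p.2 p.2) :=
        ((Gc.contDiff).comp contDiff_snd).clm_apply contDiff_snd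
      exact (((contDiff_fst.pow 2).neg).add h1)
    have : (fun p : ℝ × (Fin 3 → ℝ) => -p.1 ^ 2 + F₀ p.2 ^ 2)
        = fun p : ℝ × (Fin 3 → ℝ) => -p.1 ^ 2 + Gc p.2 p.2 := by
      funext p; rw [hg p.2, hGc]
    rw [this]
    exact hsm.contDiffAt
end
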